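/- For a non-null triangle A1A2A3 in F² over a field F of characteristic ≠ 2, the three spreads s1, s2, s3 satisfy the triple spread formula: (s1+s2+s3)² = 2(s1²+s2²+s3²) + 4·s1·s2·s3. -/

import Mathlib

/-- The quadrance between two points of `F × F`. -/
def quadrance {F : Type*} [Field F] (A B : F × F) : F :=
  (B.1 - A.1) ^ 2 + (B.2 - A.2) ^ 2

/-- The line `⟨a : b : c⟩` through two distinct points. -/
def lineThrough {F : Type*} [Field F] (A B : F × F) : F × F × F :=
  (A.2 - B.2, B.1 - A.1, A.1 * B.2 - B.1 * A.2)

/-- A line `⟨a : b : c⟩` is null when `a^2 + b^2 = 0`. -/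
def IsNullLine {F : Type*} [Field F] (l : F × F × F) : Prop :=
  l.1 ^ 2 + l.2.1 ^ 2 = 0

/-- The spread between two (non-null) lines. -/
def spread {F : Type*} [Field F] (l m : F × F × F) : F :=
  (l.1 * m.2.1 - m.1 * l.2.1) ^ 2 /
    ((l.1 ^ 2 + l.2.1 ^ 2) * (m.1 ^ 2 + m.2.1 ^ 2))

/-- Three points are collinear when they lie on a common line `a*x + b*y + c = 0`
with `(a, b) ≠ (0, 0)`. -/
def CollinearPts {F : Type*} [Field F] (A1 A2 A3 : F × F) : Prop :=
  ∃ a b c : F, ¬(a = 0 ∧ b = 0) ∧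
    a * A1.1 + b * A1.2 + c = 0 ∧
    a * A2.1 + b * A2.2 + c = 0 ∧
    a * A3.1 + b * A3.2 + c = 0

/-!
Writing `d` for twice the signed area of the triangle and `qᵢ` for the quadrance of the side
opposite `Aᵢ`, each spread is `sᵢ = d² / (qⱼ qₖ) = d² qᵢ / (q₁ q₂ q₃)`. Substituting, the triple
spread formula becomes `d⁴` times Archimedes' formula `(q₁ + q₂ + q₃)² = 2 (q₁² + q₂² + q₃²) + 4 d²`,
a polynomial identity in the coordinates.
-/

def doubleSignedArea {F : Type*} [Field F] (A B C : F × F) : F :=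
  (B.1 - A.1) * (C.2 - A.2) - (C.1 - A.1) * (B.2 - A.2)

section Plane

variable {F : Type*} [Field F]

lemma quadrance_comm (A B : F × F) : quadrance A B = quadrance B A := by
  unfold quadrance; ring

lemma isNullLine_lineThrough_iff (A B : F × F) :
    IsNullLine (lineThrough A B) ↔ quadrance A B = 0 := by
  unfold IsNullLine lineThrough quadrance
  constructor <;> intro h <;> linear_combination h

lemma doubleSignedArea_swap (A B C : F × F) :
    doubleSignedArea B A C = -doubleSignedArea A B C := by
  unfold doubleSignedArea; ring

lemma doubleSignedArea_rotate (A B C : F × F) :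
    doubleSignedArea C A B = doubleSignedArea A B C := by
  unfold doubleSignedArea; ring

lemma spread_lineThrough (A B C : F × F) :
    spread (lineThrough A B) (lineThrough A C) =
      doubleSignedArea A B C ^ 2 / (quadrance A C * quadrance A B) := by
  unfold spread lineThrough quadrance doubleSignedArea
  congr 1 <;> ring

theorem archimedes (A1 A2 A3 : F × F) :
    (quadrance A2 A3 + quadrance A1 A3 + quadrance A1 A2) ^ 2 =
      2 * (quadrance A2 A3 ^ 2 + quadrance A1 A3 ^ 2 + quadrance A1 A2 ^ 2) +
        4 * doubleSignedArea A1 A2 A3 ^ 2 := by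
  unfold quadrance doubleSignedArea; ring

end Plane

theorem triple_spread_of_archimedes {F : Type*} [Field F] {q1 q2 q3 d : F}
    (hq1 : q1 ≠ 0) (hq2 : q2 ≠ 0) (hq3 : q3 ≠ 0)
    (h : (q1 + q2 + q3) ^ 2 = 2 * (q1 ^ 2 + q2 ^ 2 + q3 ^ 2) + 4 * d ^ 2) :
    (d ^ 2 / (q2 * q3) + d ^ 2 / (q1 * q3) + d ^ 2 / (q1 * q2)) ^ 2 =
      2 * ((d ^ 2 / (q2 * q3)) ^ 2 + (d ^ 2 / (q1 * q3)) ^ 2 + (d ^ 2 / (q1 * q2)) ^ 2) +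
        4 * (d ^ 2 / (q2 * q3)) * (d ^ 2 / (q1 * q3)) * (d ^ 2 / (q1 * q2)) := by
  field_simp
  linear_combination d ^ 4 * h

theorem triple_spread_formula_general {F : Type*} [Field F]
    (A1 A2 A3 : F × F)
    (hn1 : ¬ IsNullLine (lineThrough A2 A3))
    (hn2 : ¬ IsNullLine (lineThrough A1 A3))
    (hn3 : ¬ IsNullLine (lineThrough A1 A2))
    (s1 s2 s3 : F)
    (hs1 : s1 = spread (lineThrough A1 A2) (lineThrough A1 A3))
    (hs2 : s2 = spread (lineThrough A2 A1) (lineThrough A2 A3))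
    (hs3 : s3 = spread (lineThrough A3 A1) (lineThrough A3 A2)) :
    (s1 + s2 + s3) ^ 2 = 2 * (s1 ^ 2 + s2 ^ 2 + s3 ^ 2) + 4 * s1 * s2 * s3 := by
  rw [isNullLine_lineThrough_iff] at hn1 hn2 hn3
  rw [hs1, hs2, hs3, spread_lineThrough, spread_lineThrough, spread_lineThrough,
    quadrance_comm A2 A1, quadrance_comm A3 A1, quadrance_comm A3 A2,
    doubleSignedArea_swap A1 A2 A3, doubleSignedArea_rotate A1 A2 A3, neg_sq]
  exact triple_spread_of_archimedes hn1 hn2 hn3 (archimedes A1 A2 A3)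

/-- The triple spread formula for a non-null triangle. -/
theorem triple_spread_formula {F : Type*} [Field F] (h2 : (2 : F) ≠ 0)
    (A1 A2 A3 : F × F) (hnc : ¬ CollinearPts A1 A2 A3)
    (hn1 : ¬ IsNullLine (lineThrough A2 A3))
    (hn2 : ¬ IsNullLine (lineThrough A1 A3))
    (hn3 : ¬ IsNullLine (lineThrough A1 A2))
    (s1 s2 s3 : F)
    (hs1 : s1 = spread (lineThrough A1 A2) (lineThrough A1 A3))
    (hs2 : s2 = spread (lineThrough A2 A1) (lineThrough A2 A3))
    (hs3 : s3 = spread (lineThrough A3 A1) (lineThrough A3 A2)) :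
    (s1 + s2 + s3) ^ 2 = 2 * (s1 ^ 2 + s2 ^ 2 + s3 ^ 2) + 4 * s1 * s2 * s3 :=
  triple_spread_formula_general A1 A2 A3 hn1 hn2 hn3 s1 s2 s3 hs1 hs2 hs3
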